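/- Let A have no zero entries and let Ẑ = [[0, 𝟙ᵀ],[𝟙, A^{[-1]}]] ∈ ℝ^{(n+1)×(n+1)}. Then σ₃(Ẑ) ≤ κ_F(A), where σ₃ denotes the third largest singular value and κ_F(A) = min_{X ∈ 𝒟} ‖A^{[-1]} - X‖_F. In particular, the key step is that for any B = x𝟙ᵀ - 𝟙yᵀ ∈ 𝒟, the bordered matrix [[0, 𝟙ᵀ],[𝟙, B]] has rank at most 2. -/
import Mathlib


open Matrix BigOperators

noncomputable def frobNorm {n : ℕ} (A : Matrix (Fin n) (Fin n) ℝ) : ℝ :=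
  Real.sqrt (∑ i, ∑ j, (A i j) ^ 2)

def Delta {n : ℕ} (x y : Fin n → ℝ) : Matrix (Fin n) (Fin n) ℝ :=
  Matrix.of fun i j => x i - y j

/-- Z bordered with a zero corner and all-ones first row and column. -/
def border {n : ℕ} (Z : Matrix (Fin n) (Fin n) ℝ) :
    Matrix (Unit ⊕ Fin n) (Unit ⊕ Fin n) ℝ :=
  Matrix.fromBlocks 0 (Matrix.of fun _ _ => 1) (Matrix.of fun _ _ => 1) Z

/-- spectral norm: supremum of the Euclidean norm of `M x` over the Euclidean unit ball -/
noncomputable def specNorm {m : Type*} [Fintype m] (M : Matrix m m ℝ) : ℝ :=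
  sSup { r | ∃ x : m → ℝ, (∑ i, (x i) ^ 2) ≤ 1 ∧
    r = Real.sqrt (∑ i, (M.mulVec x i) ^ 2) }

/-- the third largest singular value, via the Eckart–Young variational
characterization: the spectral-norm distance to the set of matrices of rank ≤ 2. -/
noncomputable def sigma3 {m : Type*} [Fintype m] [DecidableEq m]
    (M : Matrix m m ℝ) : ℝ :=
  sInf { r | ∃ X : Matrix m m ℝ, X.rank ≤ 2 ∧ r = specNorm (M - X) }

lemma specNorm_nonneg {m : Type*} [Fintype m] (M : Matrix m m ℝ) : 0 ≤ specNorm M :=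
  Real.sSup_nonneg (by rintro r ⟨x, hx, rfl⟩; exact Real.sqrt_nonneg _)

lemma frobNorm_nonneg {n : ℕ} (A : Matrix (Fin n) (Fin n) ℝ) : 0 ≤ frobNorm A :=
  Real.sqrt_nonneg _

lemma rank_border_delta {n : ℕ} (x y : Fin n → ℝ) : (border (Delta x y)).rank ≤ 2 := by
  set M₁ : Matrix (Unit ⊕ Fin n) (Fin 2) ℝ :=
    Matrix.of fun i k =>
      if k = 0 then (Sum.elim (fun _ => (0:ℝ)) (fun _ => 1) i)
      else (Sum.elim (fun _ => (1:ℝ)) x i) with hM₁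
  set M₂ : Matrix (Fin 2) (Unit ⊕ Fin n) ℝ :=
    Matrix.of fun k j =>
      if k = 0 then (Sum.elim (fun _ => (1:ℝ)) (fun j => -y j) j)
      else (Sum.elim (fun _ => (0:ℝ)) (fun _ => 1) j) with hM₂
  have hfact : border (Delta x y) = M₁ * M₂ := by
    ext i j
    rcases i with i | i <;> rcases j with j | j <;>
      simp [border, Delta, Matrix.mul_apply, Fin.sum_univ_two, hM₁, hM₂,
        Matrix.fromBlocks] <;> ring
  calc (border (Delta x y)).rank ≤ M₂.rank := hfact ▸ Matrix.rank_mul_le_right M₁ M₂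
    _ ≤ Fintype.card (Fin 2) := Matrix.rank_le_card_height M₂
    _ = 2 := by simp

lemma specNorm_le_frob {n : ℕ} (C : Matrix (Fin n) (Fin n) ℝ) :
    specNorm (Matrix.fromBlocks (0 : Matrix Unit Unit ℝ) 0 0 C) ≤ frobNorm C := by
  apply Real.sSup_le _ (frobNorm_nonneg C)
  rintro r ⟨x, hx, rfl⟩
  rw [frobNorm]
  apply Real.sqrt_le_sqrt
  have hxr : ∑ j, (x (Sum.inr j)) ^ 2 ≤ 1 := by
    refine le_trans ?_ hx
    rw [Fintype.sum_sum_type]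
    have : (0:ℝ) ≤ ∑ u : Unit, (x (Sum.inl u)) ^ 2 :=
      Finset.sum_nonneg fun _ _ => sq_nonneg _
    linarith
  rw [Fintype.sum_sum_type]
  have h1 : ∀ u : Unit,
      ((Matrix.fromBlocks (0 : Matrix Unit Unit ℝ) 0 0 C).mulVec x (Sum.inl u)) = 0 := by
    intro u
    simp [Matrix.mulVec, dotProduct, Fintype.sum_sum_type, Matrix.fromBlocks]
  have h2 : ∀ i : Fin n,
      ((Matrix.fromBlocks (0 : Matrix Unit Unit ℝ) 0 0 C).mulVec x (Sum.inr i)) =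
        ∑ j, C i j * x (Sum.inr j) := by
    intro i
    simp [Matrix.mulVec, dotProduct, Fintype.sum_sum_type, Matrix.fromBlocks]
  simp only [h1, h2]
  have key : ∀ i : Fin n, (∑ j, C i j * x (Sum.inr j)) ^ 2 ≤ ∑ j, (C i j) ^ 2 := by
    intro i
    calc (∑ j, C i j * x (Sum.inr j)) ^ 2
        ≤ (∑ j, (C i j) ^ 2) * ∑ j, (x (Sum.inr j)) ^ 2 :=
          Finset.sum_mul_sq_le_sq_mul_sq _ _ _
      _ ≤ (∑ j, (C i j) ^ 2) * 1 := by
          apply mul_le_mul_of_nonneg_left hxr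
          exact Finset.sum_nonneg fun _ _ => sq_nonneg _
      _ = ∑ j, (C i j) ^ 2 := mul_one _
  calc (∑ _u : Unit, (0:ℝ) ^ 2) + ∑ i, (∑ j, C i j * x (Sum.inr j)) ^ 2
      = ∑ i, (∑ j, C i j * x (Sum.inr j)) ^ 2 := by simp
    _ ≤ ∑ i, ∑ j, (C i j) ^ 2 := Finset.sum_le_sum fun i _ => key i

theorem stmt16 {n : ℕ} (A : Matrix (Fin n) (Fin n) ℝ) (hA : ∀ i j, A i j ≠ 0) :
    (∀ x y : Fin n → ℝ, (border (Delta x y)).rank ≤ 2) ∧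
    sigma3 (border (Matrix.of fun i j => (A i j)⁻¹)) ≤
      ⨅ p : (Fin n → ℝ) × (Fin n → ℝ),
        frobNorm ((Matrix.of fun i j => (A i j)⁻¹) - Delta p.1 p.2) := by
  refine ⟨fun x y => rank_border_delta x y, ?_⟩
  set Ainv : Matrix (Fin n) (Fin n) ℝ := Matrix.of fun i j => (A i j)⁻¹ with hAinv
  have hbdd : BddBelow { r | ∃ X : Matrix (Unit ⊕ Fin n) (Unit ⊕ Fin n) ℝ,
      X.rank ≤ 2 ∧ r = specNorm (border Ainv - X) } := by
    refine ⟨0, ?_⟩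
    rintro r ⟨X, _, rfl⟩
    exact specNorm_nonneg _
  apply le_ciInf
  intro p
  have hdiff : border Ainv - border (Delta p.1 p.2) =
      Matrix.fromBlocks (0 : Matrix Unit Unit ℝ) 0 0 (Ainv - Delta p.1 p.2) := by
    ext i j
    rcases i with i | i <;> rcases j with j | j <;>
      simp [border, Matrix.fromBlocks]
  have hmem : specNorm (border Ainv - border (Delta p.1 p.2)) ∈
      { r | ∃ X : Matrix (Unit ⊕ Fin n) (Unit ⊕ Fin n) ℝ,
        X.rank ≤ 2 ∧ r = specNorm (border Ainv - X) } :=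
    ⟨border (Delta p.1 p.2), rank_border_delta _ _, rfl⟩
  calc sigma3 (border Ainv) ≤ specNorm (border Ainv - border (Delta p.1 p.2)) :=
        csInf_le hbdd hmem
    _ ≤ frobNorm (Ainv - Delta p.1 p.2) := by rw [hdiff]; exact specNorm_le_frob _
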